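/- If the automorphism group of a transitive avoidance game contains a fixed-point-free involution of the board, then the game is not a Player I win. -/

import Mathlib

/-- A strategy: given the history of moves so far (in chronological order),
choose the next point to claim. -/
abbrev Strategy (X : Type*) := List X → X

/-- A strategy is valid if, whenever the history has no repeats and the board is
not yet full, it picks a previously unclaimed point. -/
def ValidStrategy {X : Type*} [Fintype X] (s : Strategy X) : Prop :=
  ∀ h : List X, h.Nodup → h.length < Fintype.card X → s h ∉ h

/-- The play (history of moves) after `k` moves, when Player I uses `sI`
(moving at even times) and Player II uses `sII` (moving at odd times). -/
def play {X : Type*} (sI sII : Strategy X) : ℕ → List X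
  | 0 => []
  | k + 1 =>
      let h := play sI sII k
      h ++ [if k % 2 = 0 then sI h else sII h]

/-- The set of points claimed by Player I in a history: the moves at even positions. -/
def claimedI {X : Type*} (h : List X) : Set X :=
  { x | ∃ i : ℕ, i % 2 = 0 ∧ h[i]? = some x }

/-- The set of points claimed by Player II in a history: the moves at odd positions. -/
def claimedII {X : Type*} (h : List X) : Set X :=
  { x | ∃ i : ℕ, i % 2 = 1 ∧ h[i]? = some x }

/-- A set of points contains a line of `ℒ`. -/
def ContainsLine {X : Type*} (ℒ : Set (Finset X)) (S : Set X) : Prop :=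
  ∃ L ∈ ℒ, ↑L ⊆ S

/-- The avoidance game with lines `ℒ` is a Player I win: Player I has a valid strategy
such that against every valid strategy of Player II there is a moment at which
Player II's claimed set contains a line while Player I's claimed set does not
(by monotonicity of the claimed sets, this says exactly that Player II's set comes
to contain a line strictly before Player I's set does). -/
def PIWin {X : Type*} [Fintype X] (ℒ : Set (Finset X)) : Prop :=
  ∃ sI : Strategy X, ValidStrategy sI ∧
    ∀ sII : Strategy X, ValidStrategy sII →
      ∃ k ≤ Fintype.card X,
        ContainsLine ℒ (claimedII (play sI sII k)) ∧
        ¬ ContainsLine ℒ (claimedI (play sI sII k))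

/-- A permutation of the board is an automorphism of the game if it maps the
family of lines onto itself. -/
def IsGameAuto {X : Type*} [DecidableEq X] (ℒ : Set (Finset X)) (g : Equiv.Perm X) : Prop :=
  ∀ L : Finset X, L ∈ ℒ ↔ L.image g ∈ ℒ

/-- The game is transitive if its automorphism group acts transitively on the board. -/
def TransitiveGame {X : Type*} [DecidableEq X] (ℒ : Set (Finset X)) : Prop :=
  ∀ x y : X, ∃ g : Equiv.Perm X, IsGameAuto ℒ g ∧ g x = y

/-!
Player II copies Player I through the fixed-point-free involution `g`: after Player I
claims `x`, Player II claims `g x`. Since `g` pairs up the board, `g x` is still free, so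
at every moment Player II's set is the image under `g` of part of Player I's set.
If Player II's set contains a line `L`, then Player I's set contains the line `g L`,
so Player II can never be the first to complete a line.
-/

section Play

variable {X : Type*}

def nthMove (sI sII : Strategy X) (i : ℕ) : X :=
  if i % 2 = 0 then sI (play sI sII i) else sII (play sI sII i)

variable (sI sII : Strategy X)

lemma play_succ (k : ℕ) : play sI sII (k + 1) = play sI sII k ++ [nthMove sI sII k] := rfl

lemma play_eq_map_range (k : ℕ) : play sI sII k = (List.range k).map (nthMove sI sII) := by
  induction k with
  | zero => rfl
  | succ k ih => rw [play_succ, ih, List.range_succ, List.map_append, List.map_singleton]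

lemma mem_play_iff {k : ℕ} {x : X} : x ∈ play sI sII k ↔ ∃ i < k, nthMove sI sII i = x := by
  simp [play_eq_map_range]

lemma getElem?_play_eq_some_iff {k i : ℕ} {x : X} :
    (play sI sII k)[i]? = some x ↔ i < k ∧ nthMove sI sII i = x := by
  rw [play_eq_map_range, List.getElem?_map]
  by_cases hi : i < k <;> simp [hi]

lemma mem_claimedI_play_iff {k : ℕ} {x : X} :
    x ∈ claimedI (play sI sII k) ↔ ∃ i < k, i % 2 = 0 ∧ nthMove sI sII i = x := by
  simp only [claimedI, Set.mem_ofPred_eq, getElem?_play_eq_some_iff]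
  grind

lemma mem_claimedII_play_iff {k : ℕ} {x : X} :
    x ∈ claimedII (play sI sII k) ↔ ∃ i < k, i % 2 = 1 ∧ nthMove sI sII i = x := by
  simp only [claimedII, Set.mem_ofPred_eq, getElem?_play_eq_some_iff]
  grind

variable [Fintype X] {sI sII}

lemma play_nodup (hsI : ValidStrategy sI) (hsII : ValidStrategy sII) {k : ℕ}
    (hk : k ≤ Fintype.card X) : (play sI sII k).Nodup := by
  induction k with
  | zero => exact List.nodup_nil
  | succ k ih =>
    have hnd := ih (by omega)
    have hlen : (play sI sII k).length < Fintype.card X := by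
      rw [play_eq_map_range, List.length_map, List.length_range]; omega
    have hfresh : nthMove sI sII k ∉ play sI sII k := by
      unfold nthMove
      split_ifs
      exacts [hsI _ hnd hlen, hsII _ hnd hlen]
    rw [play_succ, ← List.concat_eq_append]
    exact hnd.concat hfresh

lemma nthMove_injOn (hsI : ValidStrategy sI) (hsII : ValidStrategy sII) {k : ℕ}
    (hk : k ≤ Fintype.card X) : Set.InjOn (nthMove sI sII) (Set.Iio k) := by
  have hnd := play_nodup hsI hsII hk
  rw [play_eq_map_range, List.nodup_map_iff_inj_on List.nodup_range] at hnd
  exact fun i hi j hj => hnd i (List.mem_range.2 hi) j (List.mem_range.2 hj)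

end Play

section Mirror

variable {X : Type*} [DecidableEq X]

def mirrorStrategy (g : Equiv.Perm X) (s : Strategy X) : Strategy X := fun h =>
  match h.getLast? with
  | some x => if g x ∈ h then s h else g x
  | none => s h

lemma mirrorStrategy_of_getLast? {g : Equiv.Perm X} {s : Strategy X} {h : List X} {x : X}
    (hx : h.getLast? = some x) (hgx : g x ∉ h) : mirrorStrategy g s h = g x := by
  simp [mirrorStrategy, hx, hgx]

lemma ValidStrategy.mirrorStrategy [Fintype X] {s : Strategy X} (hs : ValidStrategy s)
    (g : Equiv.Perm X) : ValidStrategy (mirrorStrategy g s) := by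
  intro h hnd hlen
  unfold _root_.mirrorStrategy
  split
  · split_ifs with hgx
    exacts [hs h hnd hlen, hgx]
  · exact hs h hnd hlen

variable [Fintype X] {g : Equiv.Perm X} {sI s : Strategy X}

lemma nthMove_mirrorStrategy_odd (hsI : ValidStrategy sI) (hs : ValidStrategy s)
    (hinv : Function.Involutive g) (hfpf : ∀ x, g x ≠ x) {j : ℕ}
    (hj : 2 * j + 1 ≤ Fintype.card X) :
    nthMove sI (mirrorStrategy g s) (2 * j + 1) = g (nthMove sI (mirrorStrategy g s) (2 * j)) := by
  induction j using Nat.strong_induction_on with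
  | _ j ih =>
  set m := nthMove sI (mirrorStrategy g s)
  have inj := nthMove_injOn hsI (hs.mirrorStrategy g) hj
  have hlast : (play sI (mirrorStrategy g s) (2 * j + 1)).getLast? = some (m (2 * j)) := by
    rw [play_succ, List.getLast?_concat]
  -- `g (m (2j))` can be neither an earlier move `m (2i)` nor `m (2i+1)`, as those form a `g`-pair.
  have hfree : g (m (2 * j)) ∉ play sI (mirrorStrategy g s) (2 * j + 1) := by
    rw [mem_play_iff]
    rintro ⟨i, hi, hmi⟩
    change m _ = _ at hmi
    obtain ⟨i, rfl | rfl⟩ := Nat.even_or_odd' i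
    · rcases Nat.lt_or_ge i j with hij | hij
      · have hpair := ih i hij (by omega)
        rw [hmi, hinv] at hpair
        have := inj (Set.mem_Iio.2 (by omega)) (Set.mem_Iio.2 (by omega)) hpair
        omega
      · obtain rfl : i = j := by omega
        exact hfpf _ hmi.symm
    · have hpair := ih i (by omega) (by omega)
      rw [hmi] at hpair
      have := inj (Set.mem_Iio.2 (by omega)) (Set.mem_Iio.2 (by omega)) (g.injective hpair).symm
      omega
  show (if (2 * j + 1) % 2 = 0 then _ else _) = _
  rw [if_neg (by omega)]
  exact mirrorStrategy_of_getLast? hlast hfree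

lemma image_claimedII_subset_claimedI (hsI : ValidStrategy sI) (hs : ValidStrategy s)
    (hinv : Function.Involutive g) (hfpf : ∀ x, g x ≠ x) {k : ℕ} (hk : k ≤ Fintype.card X) :
    g '' claimedII (play sI (mirrorStrategy g s) k) ⊆ claimedI (play sI (mirrorStrategy g s) k) := by
  rintro _ ⟨x, hx, rfl⟩
  obtain ⟨i, hi, hodd, rfl⟩ := (mem_claimedII_play_iff _ _).1 hx
  obtain ⟨j, rfl⟩ : ∃ j, i = 2 * j + 1 := ⟨i / 2, by omega⟩
  rw [nthMove_mirrorStrategy_odd hsI hs hinv hfpf (by omega), hinv]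
  exact (mem_claimedI_play_iff _ _).2 ⟨2 * j, by omega, by omega, rfl⟩

end Mirror

lemma ContainsLine.image {X : Type*} [DecidableEq X] {ℒ : Set (Finset X)} {g : Equiv.Perm X}
    (hauto : IsGameAuto ℒ g) {S : Set X} (hS : ContainsLine ℒ S) : ContainsLine ℒ (g '' S) := by
  obtain ⟨L, hL, hLS⟩ := hS
  exact ⟨L.image g, (hauto L).1 hL, by rw [Finset.coe_image]; exact Set.image_mono hLS⟩

lemma ContainsLine.mono {X : Type*} {ℒ : Set (Finset X)} {S T : Set X}
    (hS : ContainsLine ℒ S) (hST : S ⊆ T) : ContainsLine ℒ T := by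
  obtain ⟨L, hL, hLS⟩ := hS
  exact ⟨L, hL, hLS.trans hST⟩

theorem statement6_general {X : Type*} [Fintype X] [DecidableEq X] (ℒ : Set (Finset X))
    (g : Equiv.Perm X) (hauto : IsGameAuto ℒ g)
    (hinv : ∀ x : X, g (g x) = x) (hfpf : ∀ x : X, g x ≠ x) :
    ¬ PIWin ℒ := by
  rintro ⟨sI, hsI, hwin⟩
  obtain ⟨k, hk, hII, hI⟩ := hwin (mirrorStrategy g sI) (hsI.mirrorStrategy g)
  exact hI ((hII.image hauto).mono (image_claimedII_subset_claimedI hsI hsI hinv hfpf hk))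

/-- If the automorphism group of a transitive avoidance game contains a
fixed-point-free involution of the board, then the game is not a Player I win. -/
theorem statement6 {X : Type*} [Fintype X] [DecidableEq X] (ℒ : Set (Finset X))
    (htrans : TransitiveGame ℒ) (g : Equiv.Perm X) (hauto : IsGameAuto ℒ g)
    (hinv : ∀ x : X, g (g x) = x) (hfpf : ∀ x : X, g x ≠ x) :
    ¬ PIWin ℒ :=
  statement6_general ℒ g hauto hinv hfpf
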